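/- Let δ ≥ 1, let Γ be a connected, locally finite, δ-hyperbolic graph, let D ≥ 8δ + 1, and let C be a nonempty finite set of vertices of Γ of diameter at most 4δ + 1. Then for every r ∈ ℕ the subgraph of the Rips graph Γ_D induced on the ball B_r(C) is dismantlable. -/

import Mathlib

open SimpleGraph

variable {V : Type*}

/-- The closed neighbourhood of a vertex: the vertex together with all its neighbours. -/
def closedNbhd (G : SimpleGraph V) (ρ : V) : Set V := insert ρ {w | G.Adj ρ w}

/-- `ρ` is dominated by `π` within the subgraph of `G` induced on `S`:
`π ∈ S`, `π ≠ ρ`, and `N(ρ) ∩ S ⊆ N(π)`. -/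
def DominatedIn (G : SimpleGraph V) (S : Set V) (ρ π : V) : Prop :=
  π ∈ S ∧ π ≠ ρ ∧ ∀ w ∈ S, w ∈ closedNbhd G ρ → w ∈ closedNbhd G π

/-- The subgraph of `G` induced on `S` is dismantlable: the vertices of `S` can be
arranged in a (finite) list such that each vertex except the last is dominated in the
subgraph induced on it and the later vertices. -/
def DismantlableOn (G : SimpleGraph V) (S : Set V) : Prop :=
  ∃ l : List V, l.Nodup ∧ (∀ v, v ∈ l ↔ v ∈ S) ∧
    ∀ (i : ℕ) (h : i < l.length), i < l.length - 1 →
      ∃ π, DominatedIn G {w | w ∈ l.drop i} (l[i]'h) π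

/-- A graph is dismantlable if the subgraph induced on all of its vertices is. -/
def Dismantlable (G : SimpleGraph V) : Prop := DismantlableOn G Set.univ

/-- The set `Π*(ρ)` of all vertices appearing in pairs of `Π ρ`. -/
def PiStar (Pr : V → Finset (Sym2 V)) (ρ : V) : Set V := {v | ∃ p ∈ Pr ρ, v ∈ p}

/-- `Pr` is a `σ`-projection: it assigns to each vertex `ρ ≠ σ` a nonempty finite set of
unordered pairs of vertices such that (i) every finite set `R` containing a vertex other
than `σ` has an exposed vertex, and (ii) there is no cycle `ρ₀, …, ρ_{m-1}` with
`ρ_{i+1} ∈ Π*(ρ_i)` (indices mod `m`). -/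
structure IsSigmaProjection (G : SimpleGraph V) (σ : V) (Pr : V → Finset (Sym2 V)) : Prop where
  nonempty : ∀ ρ, ρ ≠ σ → (Pr ρ).Nonempty
  exposed : ∀ R : Finset V, (∃ ρ ∈ R, ρ ≠ σ) →
    ∃ ρ ∈ R, ρ ≠ σ ∧ ∃ p ∈ Pr ρ, ∀ π ∈ p,
      ∀ w ∈ R, w ∈ closedNbhd G ρ → w ∈ closedNbhd G π
  acyclic : ¬ ∃ m : ℕ, 0 < m ∧ ∃ f : ZMod m → V,
    ∀ i, f i ≠ σ ∧ f (i + 1) ∈ PiStar Pr (f i)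

/-- `R` is `Π`-convex: for every `ρ ∈ R` other than `σ`, each pair in `Π ρ` meets `R`. -/
def PiConvex (σ : V) (Pr : V → Finset (Sym2 V)) (R : Set V) : Prop :=
  ∀ ρ ∈ R, ρ ≠ σ → ∀ p ∈ Pr ρ, ∃ v ∈ p, v ∈ R

/-- The orbit `HR` of a set `R` under a group action. -/
def orbitSet (H : Type*) [Group H] [MulAction H V] (R : Set V) : Set V :=
  {x | ∃ h : H, ∃ ρ ∈ R, x = h • ρ}

/-- The geometric realization of the flag complex of `G` inside `ℝ^V`: the union over
all (nonempty) cliques of the convex hulls of the corresponding standard basis vectors. -/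
def flagRealization [DecidableEq V] (G : SimpleGraph V) : Set (V → ℝ) :=
  ⋃ (Δ : Set V) (_ : Δ.Nonempty) (_ : G.IsClique Δ),
    convexHull ℝ ((fun v => (Pi.single v 1 : V → ℝ)) '' Δ)

/-- A walk is a geodesic if its length equals the distance between its endpoints. -/
def IsGeodesic (G : SimpleGraph V) {u v : V} (p : G.Walk u v) : Prop :=
  p.length = G.dist u v

/-- `G` is `δ`-hyperbolic: for any geodesic triangle, each vertex on one side is within
distance `δ` of some vertex on the union of the other two sides. -/
def Hyperbolic (G : SimpleGraph V) (δ : ℕ) : Prop :=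
  ∀ (u v w : V) (p : G.Walk u v) (q : G.Walk v w) (r : G.Walk w u),
    IsGeodesic G p → IsGeodesic G q → IsGeodesic G r →
    ∀ t ∈ p.support, ∃ s, (s ∈ q.support ∨ s ∈ r.support) ∧ G.dist t s ≤ δ

/-- The Rips graph `Γ_D`: same vertices, two distinct vertices adjacent iff their
graph distance in `G` is at most `D`. -/
def ripsGraph (G : SimpleGraph V) (D : ℕ) : SimpleGraph V where
  Adj u v := u ≠ v ∧ G.dist u v ≤ D
  symm := by
    constructor
    intro u v h
    exact ⟨h.1.symm, by rw [SimpleGraph.dist_comm]; exact h.2⟩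
  loopless := by
    constructor
    intro v h
    exact h.1 rfl

/-- The ball of radius `r` around a set `C` of vertices. -/
def ballSet (G : SimpleGraph V) (C : Set V) (r : ℕ) : Set V :=
  {v | ∃ c ∈ C, G.dist v c ≤ r}

/-!
Order the ball by decreasing distance to `C`. A vertex `ρ` at distance more than `2δ` from `C`
is dominated in `Γ_D`, among the vertices not farther from `C`, by the vertex `2δ` closer to `C`
on a geodesic towards a nearest point of `C`: thinness of the triangle formed with any
`Γ_D`-neighbour `w` keeps `w` within `D` of that vertex. The vertices within `2δ` of `C` are
pairwise at distance at most `2δ + (4δ + 1) + 2δ = 8δ + 1 ≤ D`, so they form a clique of `Γ_D`,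
in which any vertex dominates any other.
-/

theorem dismantlableOn_of_height {G : SimpleGraph V} {S : Set V} (hS : S.Finite) (f : V → ℕ)
    (h : ∀ ρ ∈ S,
      (∃ π ∈ S, f π < f ρ ∧
        ∀ w ∈ S, f w ≤ f ρ → w ∈ closedNbhd G ρ → w ∈ closedNbhd G π) ∨
      ∀ v ∈ S, ∀ w ∈ S, f v ≤ f ρ → f w ≤ f ρ → w ∈ closedNbhd G v) :
    DismantlableOn G S := by
  classical
  set l := hS.toFinset.toList.mergeSort (fun a b => decide (f b ≤ f a))
  have hperm : l.Perm hS.toFinset.toList := List.mergeSort_perm _ _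
  have hmem : ∀ v, v ∈ l ↔ v ∈ S := by simp [hperm.mem_iff]
  have hsorted : l.Pairwise (fun a b => f b ≤ f a) := by
    simpa using List.pairwise_mergeSort (le := fun a b => decide (f b ≤ f a))
      (fun a b c hab hbc => by simp only [decide_eq_true_eq] at *; omega)
      (fun a b => by simp only [Bool.or_eq_true, decide_eq_true_eq]; omega) _
  have hnodup : l.Nodup := hperm.nodup_iff.2 (Finset.nodup_toList _)
  refine ⟨l, hnodup, hmem, fun i hi hlast => ?_⟩
  set ρ := l[i]
  have hdrop : l.drop i = ρ :: l.drop (i + 1) := List.drop_eq_getElem_cons hi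
  have hρS : ρ ∈ S := (hmem ρ).1 (List.getElem_mem hi)
  have hbelow : ∀ w ∈ l.drop i, f w ≤ f ρ := by
    have := (hsorted.drop (i := i))
    rw [hdrop, List.pairwise_cons] at this
    rw [hdrop]
    rintro w (_ | ⟨_, hw⟩)
    exacts [le_rfl, this.1 w hw]
  have habove : ∀ v ∈ S, f v < f ρ → v ∈ l.drop i := by
    intro v hv hlt
    have hsplit := List.take_append_drop i l ▸ hsorted
    rcases List.mem_append.1 ((List.take_append_drop i l).symm ▸ (hmem v).2 hv) with hv | hv
    · have := (List.pairwise_append.1 hsplit).2.2 v hv ρ (hdrop ▸ List.mem_cons_self)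
      omega
    · exact hv
  rcases h ρ hρS with ⟨π, hπS, hlt, hdom⟩ | hclique
  · exact ⟨π, habove π hπS hlt, by rintro rfl; exact lt_irrefl _ hlt,
      fun w hw => hdom w ((hmem w).1 (List.mem_of_mem_drop hw)) (hbelow w hw)⟩
  · have hi1 : i + 1 < l.length := by omega
    have hπ : l[i + 1] ∈ l.drop i := by
      rw [hdrop]
      exact List.mem_cons_of_mem _ (List.drop_eq_getElem_cons hi1 ▸ List.mem_cons_self)
    refine ⟨l[i + 1], hπ, fun heq => ?_, fun w hw _ => ?_⟩
    · have := (hnodup.getElem_inj_iff).1 heq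
      omega
    · exact hclique _ ((hmem _).1 (List.getElem_mem hi1)) w
        ((hmem w).1 (List.mem_of_mem_drop hw)) (hbelow _ hπ) (hbelow w hw)

namespace SimpleGraph

variable {G : SimpleGraph V}

lemma Walk.dist_getVert_le {u v : V} (p : G.Walk u v) (n : ℕ) : G.dist u (p.getVert n) ≤ n :=
  (G.dist_le (p.take n)).trans (by simp)

lemma Walk.dist_getVert_le_length_sub {u v : V} (p : G.Walk u v) (n : ℕ) :
    G.dist (p.getVert n) v ≤ p.length - n :=
  (G.dist_le (p.drop n)).trans (by simp)

lemma Connected.dist_add_dist_of_mem_geodesic (hconn : G.Connected) {u v s : V}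
    {p : G.Walk u v} (hp : IsGeodesic G p) (hs : s ∈ p.support) :
    G.dist u s + G.dist s v = G.dist u v := by
  classical
  have hu : G.dist u s ≤ (p.takeUntil s hs).length := G.dist_le _
  have hv : G.dist s v ≤ (p.dropUntil s hs).length := G.dist_le _
  have hlen := congrArg Walk.length (p.take_spec hs)
  rw [Walk.length_append] at hlen
  have := hconn.dist_triangle (u := u) (v := s) (w := v)
  unfold IsGeodesic at hp
  omega

lemma Connected.finite_setOf_dist_le (hconn : G.Connected)
    (hlf : ∀ v : V, (G.neighborSet v).Finite) (c : V) (r : ℕ) :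
    {v | G.dist v c ≤ r}.Finite := by
  induction r with
  | zero =>
    refine (Set.finite_singleton c).subset fun v hv => ?_
    exact hconn.dist_eq_zero_iff.1 (Nat.le_zero.1 hv)
  | succ r ih =>
    refine (ih.union (ih.biUnion fun u _ => hlf u)).subset fun v hv => ?_
    obtain hle | hlt := le_or_gt (G.dist v c) r
    · exact Or.inl hle
    · obtain ⟨p, hp⟩ := hconn.exists_walk_length_eq_dist v c
      have hpos : 0 < p.length := by simp only [Set.mem_ofPred_eq] at hv; omega
      refine Or.inr (Set.mem_biUnion (x := p.getVert 1) ?_ ?_)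
      · have := p.dist_getVert_le_length_sub 1
        simp only [Set.mem_ofPred_eq] at hv ⊢
        omega
      · simpa using (p.adj_getVert_succ hpos).symm

/-- `0` when `C` is empty (`sInf ∅ = 0`). -/
noncomputable def distToSet (G : SimpleGraph V) (C : Set V) (v : V) : ℕ :=
  sInf (G.dist v '' C)

variable (G) in
lemma distToSet_le {C : Set V} {c : V} (hc : c ∈ C) (v : V) : G.distToSet C v ≤ G.dist v c :=
  Nat.sInf_le ⟨c, hc, rfl⟩

variable (G) in
lemma exists_dist_eq_distToSet {C : Set V} (hC : C.Nonempty) (v : V) :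
    ∃ c ∈ C, G.dist v c = G.distToSet C v :=
  Nat.sInf_mem (hC.image _)

lemma distToSet_le_of_mem_ballSet {C : Set V} {r : ℕ} {v : V} (hv : v ∈ ballSet G C r) :
    G.distToSet C v ≤ r :=
  let ⟨_, hc, hvc⟩ := hv
  (G.distToSet_le hc v).trans hvc

lemma nonempty_of_mem_ballSet {C : Set V} {r : ℕ} {v : V} (hv : v ∈ ballSet G C r) :
    C.Nonempty :=
  let ⟨c, hc, _⟩ := hv
  ⟨c, hc⟩

lemma mem_ballSet_of_distToSet_le {C : Set V} {r : ℕ} (hC : C.Nonempty) {v : V}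
    (hv : G.distToSet C v ≤ r) : v ∈ ballSet G C r :=
  let ⟨c, hc, hvc⟩ := G.exists_dist_eq_distToSet hC v
  ⟨c, hc, hvc ▸ hv⟩

lemma Connected.ballSet_finite (hconn : G.Connected) (hlf : ∀ v : V, (G.neighborSet v).Finite)
    {C : Set V} (hC : C.Finite) (r : ℕ) : (ballSet G C r).Finite := by
  refine (hC.biUnion fun c _ => hconn.finite_setOf_dist_le hlf c r).subset ?_
  rintro v ⟨c, hc, hvc⟩
  exact Set.mem_biUnion hc hvc

lemma Connected.dist_le_distToSet_add (hconn : G.Connected) {C : Set V} {k : ℕ}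
    (hdiam : ∀ x ∈ C, ∀ y ∈ C, G.dist x y ≤ k) {c : V} (hc : c ∈ C) (w : V) :
    G.dist w c ≤ G.distToSet C w + k := by
  obtain ⟨c', hc', hwc'⟩ := G.exists_dist_eq_distToSet ⟨c, hc⟩ w
  have := hconn.dist_triangle (u := w) (v := c') (w := c)
  have := hdiam c' hc' c hc
  omega

lemma Connected.dist_le_distToSet_add_distToSet (hconn : G.Connected) {C : Set V} {k : ℕ}
    (hdiam : ∀ x ∈ C, ∀ y ∈ C, G.dist x y ≤ k) (hC : C.Nonempty) (v w : V) :
    G.dist v w ≤ G.distToSet C v + k + G.distToSet C w := by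
  obtain ⟨c, hc, hvc⟩ := G.exists_dist_eq_distToSet hC v
  have := hconn.dist_triangle (u := v) (v := c) (w := w)
  have := hconn.dist_le_distToSet_add hdiam hc w
  rw [dist_comm] at this
  omega

end SimpleGraph

lemma mem_closedNbhd_ripsGraph {G : SimpleGraph V} {D : ℕ} {ρ w : V} :
    w ∈ closedNbhd (ripsGraph G D) ρ ↔ G.dist ρ w ≤ D := by
  refine ⟨?_, fun h => ?_⟩
  · rintro (rfl | hadj)
    exacts [by simp, hadj.2]
  · by_cases hw : w = ρ
    exacts [Or.inl hw, Or.inr ⟨Ne.symm hw, h⟩]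

lemma Hyperbolic.dist_le_of_mem_geodesic {G : SimpleGraph V} {δ : ℕ} (hhyp : Hyperbolic G δ)
    (hconn : G.Connected) {v c w v' : V} {p : G.Walk v c} (hp : IsGeodesic G p)
    (hv' : v' ∈ p.support) (hvv' : G.dist v v' = 2 * δ)
    (hwc : G.dist w c ≤ G.dist v c + (4 * δ + 1)) :
    G.dist w v' ≤ max (G.dist w v) (8 * δ + 1) := by
  obtain ⟨q, hq⟩ := hconn.exists_walk_length_eq_dist c w
  obtain ⟨q', hq'⟩ := hconn.exists_walk_length_eq_dist w v
  have hsplit := hconn.dist_add_dist_of_mem_geodesic hp hv'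
  obtain ⟨s, hs, hv's⟩ := hhyp v c w p q q' hp hq hq' v' hv'
  have hws : G.dist w v' ≤ G.dist w s + G.dist v' s :=
    dist_comm (u := s) (v := v') ▸ hconn.dist_triangle
  rcases hs with hs | hs
  · have hcsw := hconn.dist_add_dist_of_mem_geodesic hq hs
    have hv'c : G.dist v' c ≤ G.dist v' s + G.dist c s :=
      dist_comm (u := s) (v := c) ▸ hconn.dist_triangle
    have : G.dist s w = G.dist w s := dist_comm
    have : G.dist c w = G.dist w c := dist_comm
    omega
  · have hwsv := hconn.dist_add_dist_of_mem_geodesic hq' hs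
    have hvv'_le : G.dist v v' ≤ G.dist s v + G.dist v' s := by
      rw [dist_comm (u := s) (v := v), dist_comm (u := v') (v := s)]
      exact hconn.dist_triangle
    omega

lemma exists_closer_dominating_in_ripsGraph {G : SimpleGraph V} {δ D : ℕ}
    (hconn : G.Connected) (hhyp : Hyperbolic G δ) (hδ : 1 ≤ δ) (hD : 8 * δ + 1 ≤ D)
    {C : Set V} (hdiam : ∀ x ∈ C, ∀ y ∈ C, G.dist x y ≤ 4 * δ + 1) {r : ℕ} {ρ : V}
    (hρ : ρ ∈ ballSet G C r) (hfar : 2 * δ + 1 ≤ G.distToSet C ρ) :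
    ∃ π ∈ ballSet G C r, G.distToSet C π < G.distToSet C ρ ∧
      ∀ w, G.distToSet C w ≤ G.distToSet C ρ →
        w ∈ closedNbhd (ripsGraph G D) ρ → w ∈ closedNbhd (ripsGraph G D) π := by
  have hC := nonempty_of_mem_ballSet hρ
  obtain ⟨c, hc, hρc⟩ := G.exists_dist_eq_distToSet hC ρ
  obtain ⟨p, hp⟩ := hconn.exists_walk_length_eq_dist ρ c
  set π := p.getVert (2 * δ)
  have hπ : π ∈ p.support := p.getVert_mem_support _
  have hsplit := hconn.dist_add_dist_of_mem_geodesic hp hπ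
  have hρπ : G.dist ρ π = 2 * δ := by
    have : G.dist ρ π ≤ 2 * δ := p.dist_getVert_le _
    have : G.dist π c ≤ p.length - 2 * δ := p.dist_getVert_le_length_sub _
    omega
  have hcloser : G.distToSet C π < G.distToSet C ρ := by
    have := G.distToSet_le hc π
    omega
  refine ⟨π, mem_ballSet_of_distToSet_le hC ?_, hcloser, fun w hw hρw => ?_⟩
  · have := distToSet_le_of_mem_ballSet hρ
    omega
  rw [mem_closedNbhd_ripsGraph, SimpleGraph.dist_comm] at hρw ⊢
  have hwc := hconn.dist_le_distToSet_add hdiam hc w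
  exact (hhyp.dist_le_of_mem_geodesic hconn hp hπ hρπ (by omega)).trans (max_le hρw hD)

theorem rips_ball_dismantlable {V : Type*} (G : SimpleGraph V) (hconn : G.Connected)
    (hlf : ∀ v : V, (G.neighborSet v).Finite)
    (δ : ℕ) (hδ : 1 ≤ δ) (hhyp : Hyperbolic G δ)
    (D : ℕ) (hD : 8 * δ + 1 ≤ D)
    (C : Set V) (hCfin : C.Finite)
    (hCdiam : ∀ x ∈ C, ∀ y ∈ C, G.dist x y ≤ 4 * δ + 1)
    (r : ℕ) :
    DismantlableOn (ripsGraph G D) (ballSet G C r) := by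
  refine dismantlableOn_of_height (hconn.ballSet_finite hlf hCfin r) (G.distToSet C)
    fun ρ hρ => ?_
  by_cases hfar : 2 * δ + 1 ≤ G.distToSet C ρ
  · obtain ⟨π, hπ, hcloser, hdom⟩ :=
      exists_closer_dominating_in_ripsGraph hconn hhyp hδ hD hCdiam hρ hfar
    exact Or.inl ⟨π, hπ, hcloser, fun w _ => hdom w⟩
  · refine Or.inr fun v _ w _ hv hw => mem_closedNbhd_ripsGraph.2 ?_
    have := hconn.dist_le_distToSet_add_distToSet hCdiam (nonempty_of_mem_ballSet hρ) v w
    omega
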